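/- arXiv:2208.04778 — 5 statements merged into one kernel-verified Lean document; each statement's English description precedes it below -/
import Mathlib

section
/- Let X be a proper geodesic metric space with basepoint o and let τ : [0,∞) → X be a geodesic ray. Suppose that for every θ > 0 there is R₀ > 0 such that for all R ≥ R₀: whenever x, y ∈ X satisfy d(x,y) ≤ d(x, im τ) and ‖x‖ ≤ R, then diam(π_τ(x) ∪ π_τ(y)) ≤ θR. Then there exists a sublinear function κ such that the image of τ is κ-contracting. -/
open Metric Set Filter

/-- A map `γ` is a (unit-speed) geodesic on the interval `I ⊆ ℝ`:
`I` is order-connected (an interval) and `γ` is an isometric embedding of `I`. -/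
def IsGeodesicOn {X : Type*} [MetricSpace X] (γ : ℝ → X) (I : Set ℝ) : Prop :=
  I.OrdConnected ∧ ∀ s ∈ I, ∀ t ∈ I, dist (γ s) (γ t) = |s - t|

/-- `X` is a geodesic metric space: any two points are joined by a geodesic segment. -/
def GeodesicSpace (X : Type*) [MetricSpace X] : Prop :=
  ∀ x y : X, ∃ γ : ℝ → X, γ 0 = x ∧ γ (dist x y) = y ∧
    ∀ s ∈ Set.Icc 0 (dist x y), ∀ t ∈ Set.Icc 0 (dist x y), dist (γ s) (γ t) = |s - t|

/-- The set of nearest-point projections of `x` to `Z`. -/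
def projSet {X : Type*} [MetricSpace X] (Z : Set X) (x : X) : Set X :=
  {y | y ∈ Z ∧ dist x y = Metric.infDist x Z}

/-- A subset `Z ⊆ X` is `N`-contracting: whenever `d(x,y) < d(x,Z)`, any two
nearest-point projections of `x` and `y` to `Z` are at distance at most `N`. -/
def IsContractingSet {X : Type*} [MetricSpace X] (N : ℝ) (Z : Set X) : Prop :=
  ∀ x y : X, dist x y < Metric.infDist x Z →
    ∀ p ∈ projSet Z x, ∀ q ∈ projSet Z y, dist p q ≤ N

/-- A geodesic ray: an isometric embedding of `[0,∞)`. -/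
def IsGeodesicRay {X : Type*} [MetricSpace X] (τ : ℝ → X) : Prop :=
  ∀ s ∈ Set.Ici (0:ℝ), ∀ t ∈ Set.Ici (0:ℝ), dist (τ s) (τ t) = |s - t|

/-- The geodesic ray `τ` is `(N,C)`-frequently contracting. -/
def FreqContracting {X : Type*} [MetricSpace X] (N C : ℝ) (τ : ℝ → X) : Prop :=
  ∀ L > (0:ℝ), ∀ θ ∈ Set.Ioo (0:ℝ) 1, ∃ R₀ > (0:ℝ),
    ∀ R > R₀, ∀ t : ℝ, 0 < t → t < (1 - θ) * R →
      ∃ s : ℝ, Set.Icc (s - L) (s + L) ⊆ Set.Icc t (t + θ * R) ∧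
        ∃ (γ : ℝ → X) (I : Set ℝ), IsGeodesicOn γ I ∧ IsContractingSet N (γ '' I) ∧
          ∀ u ∈ Set.Icc (s - L) (s + L), Metric.infDist (τ u) (γ '' I) ≤ C

/-- A sublinear function: monotone increasing, concave, `≥ 1`, and `κ(t)/t → 0`. -/
def IsSublinear (κ : ℝ → ℝ) : Prop :=
  MonotoneOn κ (Set.Ici 0) ∧ ConcaveOn ℝ (Set.Ici 0) κ ∧ (∀ t : ℝ, 0 ≤ t → 1 ≤ κ t) ∧
    Filter.Tendsto (fun t => κ t / t) Filter.atTop (nhds 0)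

/-- `Z` is `κ`-contracting (with respect to the basepoint `o`). -/
def IsKappaContracting {X : Type*} [MetricSpace X] (o : X) (κ : ℝ → ℝ) (Z : Set X) : Prop :=
  ∃ c > (0:ℝ), ∀ x y : X, dist x y ≤ Metric.infDist x Z →
    Metric.diam (projSet Z x ∪ projSet Z y) ≤ c * κ (dist o x)

/-!
Taking `θ = 1/(n+1)` gives thresholds `Rₙ` such that the projection diameter at a point of norm `t`
is at most `(t + Rₙ)/(n+1)` for every `n`. The infimum over `n` of these affine functions, plus `1`,
is sublinear: an infimum of increasing affine maps is increasing and concave, and it eventually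
grows slower than every slope `1/(n+1)`.
-/

noncomputable def sublinearEnvelope (R : ℕ → ℝ) (t : ℝ) : ℝ :=
  ⨅ n : ℕ, (t + R n) / (n + 1) + 1

namespace sublinearEnvelope

variable {R : ℕ → ℝ}

lemma one_le_affine (hR : ∀ n, 0 ≤ R n) {t : ℝ} (ht : 0 ≤ t) (n : ℕ) :
    1 ≤ (t + R n) / (n + 1) + 1 := by
  have : 0 ≤ (t + R n) / (n + 1) := div_nonneg (add_nonneg ht (hR n)) (by positivity)
  linarith

lemma bddBelow_range_affine (hR : ∀ n, 0 ≤ R n) {t : ℝ} (ht : 0 ≤ t) :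
    BddBelow (range fun n : ℕ => (t + R n) / (n + 1) + 1) :=
  ⟨1, by rintro _ ⟨n, rfl⟩; exact one_le_affine hR ht n⟩

lemma le_affine (hR : ∀ n, 0 ≤ R n) {t : ℝ} (ht : 0 ≤ t) (n : ℕ) :
    sublinearEnvelope R t ≤ (t + R n) / (n + 1) + 1 :=
  ciInf_le (bddBelow_range_affine hR ht) n

lemma one_le (hR : ∀ n, 0 ≤ R n) {t : ℝ} (ht : 0 ≤ t) : 1 ≤ sublinearEnvelope R t :=
  le_ciInf (one_le_affine hR ht)

lemma monotoneOn (hR : ∀ n, 0 ≤ R n) : MonotoneOn (sublinearEnvelope R) (Ici 0) := by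
  intro s hs t _ hst
  refine le_ciInf fun n => (le_affine hR hs n).trans ?_
  gcongr

lemma concaveOn (hR : ∀ n, 0 ≤ R n) : ConcaveOn ℝ (Ici 0) (sublinearEnvelope R) := by
  refine ⟨convex_Ici 0, fun x hx y hy a b ha hb hab => le_ciInf fun n => ?_⟩
  calc a • sublinearEnvelope R x + b • sublinearEnvelope R y
      ≤ a * ((x + R n) / (n + 1) + 1) + b * ((y + R n) / (n + 1) + 1) := by
        simp only [smul_eq_mul]
        gcongr
        exacts [le_affine hR hx n, le_affine hR hy n]
    _ = (a • x + b • y + R n) / (n + 1) + 1 := by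
        obtain rfl : b = 1 - a := eq_sub_of_add_eq' hab
        simp only [smul_eq_mul]
        field_simp
        ring

lemma tendsto_div_atTop (hR : ∀ n, 0 ≤ R n) :
    Tendsto (fun t => sublinearEnvelope R t / t) atTop (nhds 0) := by
  refine tendsto_order.2 ⟨fun a ha => ?_, fun ε hε => ?_⟩
  · filter_upwards [eventually_gt_atTop 0] with t ht
    exact ha.trans_le (div_nonneg (zero_le_one.trans (one_le hR ht.le)) ht.le)
  · obtain ⟨n, hn⟩ := exists_nat_one_div_lt hε
    have hslope : Tendsto (fun t : ℝ => 1 / (n + 1) + (R n / (n + 1) + 1) * t⁻¹) atTop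
        (nhds (1 / (n + 1))) := by
      simpa using tendsto_const_nhds.add (tendsto_inv_atTop_zero.const_mul (R n / (n + 1) + 1))
    filter_upwards [eventually_gt_atTop 0, hslope.eventually (gt_mem_nhds hn)] with t ht hlt
    refine lt_of_le_of_lt ?_ hlt
    calc sublinearEnvelope R t / t ≤ ((t + R n) / (n + 1) + 1) / t := by
          gcongr; exact le_affine hR ht.le n
      _ = 1 / (n + 1) + (R n / (n + 1) + 1) * t⁻¹ := by field_simp; ring

theorem isSublinear (hR : ∀ n, 0 ≤ R n) : IsSublinear (sublinearEnvelope R) :=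
  ⟨monotoneOn hR, concaveOn hR, fun _ => one_le hR, tendsto_div_atTop hR⟩

end sublinearEnvelope

theorem exists_isSublinear_le_of_forall_le_mul {ι : Type*} (a r : ι → ℝ) (hr : ∀ i, 0 ≤ r i)
    (h : ∀ θ > (0:ℝ), ∃ R₀ > (0:ℝ), ∀ R ≥ R₀, ∀ i, r i ≤ R → a i ≤ θ * R) :
    ∃ κ : ℝ → ℝ, IsSublinear κ ∧ ∀ i, a i ≤ κ (r i) := by
  choose R hRpos hR using fun n : ℕ => h (1 / (n + 1)) (by positivity)
  have hR0 : ∀ n, 0 ≤ R n := fun n => (hRpos n).le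
  refine ⟨sublinearEnvelope R, sublinearEnvelope.isSublinear hR0, fun i => le_ciInf fun n => ?_⟩
  calc a i ≤ 1 / (n + 1) * max (R n) (r i) :=
        hR n _ (le_max_left _ _) i (le_max_right _ _)
    _ ≤ 1 / (n + 1) * (r i + R n) := by
        gcongr; exact max_le (by linarith [hr i]) (by linarith [hR0 n])
    _ ≤ (r i + R n) / (n + 1) + 1 := by rw [one_div_mul_eq_div]; linarith

theorem small_linear_projections_implies_sublinearly_contracting_general
    {X : Type*} [MetricSpace X]
    (o : X) (τ : ℝ → X)
    (h : ∀ θ > (0:ℝ), ∃ R₀ > (0:ℝ), ∀ R ≥ R₀, ∀ x y : X,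
      dist x y ≤ Metric.infDist x (τ '' Set.Ici 0) → dist o x ≤ R →
        Metric.diam (projSet (τ '' Set.Ici 0) x ∪ projSet (τ '' Set.Ici 0) y) ≤ θ * R) :
    ∃ κ : ℝ → ℝ, IsSublinear κ ∧ IsKappaContracting o κ (τ '' Set.Ici 0) := by
  set Z := τ '' Ici (0:ℝ)
  obtain ⟨κ, hκ, hle⟩ := exists_isSublinear_le_of_forall_le_mul
    (ι := {p : X × X // dist p.1 p.2 ≤ infDist p.1 Z})
    (fun p => diam (projSet Z p.1.1 ∪ projSet Z p.1.2)) (fun p => dist o p.1.1)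
    (fun _ => dist_nonneg)
    (fun θ hθ => (h θ hθ).imp fun _ ⟨hR₀, hR⟩ => ⟨hR₀, fun R hR' p => hR R hR' _ _ p.2⟩)
  exact ⟨κ, hκ, 1, one_pos, fun x y hxy => by simpa using hle ⟨(x, y), hxy⟩⟩

/-- If projections to a geodesic ray `τ` of pairs of points `x, y` with
`d(x,y) ≤ d(x, im τ)` and `‖x‖ ≤ R` have diameter at most `θR` for every `θ > 0` and all
large `R`, then `τ` is `κ`-contracting for some sublinear function `κ`. -/
theorem small_linear_projections_implies_sublinearly_contracting
    {X : Type*} [MetricSpace X] [ProperSpace X] (hgeo : GeodesicSpace X)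
    (o : X) (τ : ℝ → X) (hτo : τ 0 = o) (hray : IsGeodesicRay τ)
    (h : ∀ θ > (0:ℝ), ∃ R₀ > (0:ℝ), ∀ R ≥ R₀, ∀ x y : X,
      dist x y ≤ Metric.infDist x (τ '' Set.Ici 0) → dist o x ≤ R →
        Metric.diam (projSet (τ '' Set.Ici 0) x ∪ projSet (τ '' Set.Ici 0) y) ≤ θ * R) :
    ∃ κ : ℝ → ℝ, IsSublinear κ ∧ IsKappaContracting o κ (τ '' Set.Ici 0) :=
  small_linear_projections_implies_sublinearly_contracting_general o τ h
end

section
/- Let X be a proper geodesic metric space with basepoint o, let κ be a sublinear function, and let β : [0,∞) → X be a quasi-geodesic ray with β(0) = o whose image is κ-contracting. Then the image of β is weakly κ-Morse: there is a function m : (0,∞)² → (0,∞) such that every (q,Q)-quasi-geodesic segment with both endpoints on the image of β is contained in the (κ, m(q,Q))-neighbourhood of the image of β. -/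
open Metric Set Filter

/-- A `(q,Q)`-quasi-geodesic on the set `I ⊆ ℝ`: continuous and bi-Lipschitz up to
additive error. -/
def IsQuasiGeodesicOn {X : Type*} [MetricSpace X] (q Q : ℝ) (η : ℝ → X) (I : Set ℝ) : Prop :=
  ContinuousOn η I ∧ ∀ s ∈ I, ∀ t ∈ I,
    |s - t| / q - Q ≤ dist (η s) (η t) ∧ dist (η s) (η t) ≤ q * |s - t| + Q


/-!
Let `Z` be the image of `β`; it is closed, so nearest-point projections to `Z` exist. Take a
`(q,Q)`-quasi-geodesic `η` with endpoints on `Z` and a time `t` with `η t` outside the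
`(κ, R)`-neighbourhood of `Z`, and let `[s₁, s₂]` be the maximal excursion of `η` through `t`.
Cut `η|[s₁, s₂]` greedily into steps from `η v` to a point at distance `d(η v, Z)`. By
`κ`-contraction each step moves the projection by at most `c κ(‖η v‖) ≤ (c/R) d(η v, Z)`, while it
uses parameter time at least `d(η v, Z) / 2q`. So the projections of the endpoints are
`(2qc/R)(s₂ - s₁) + O(d(η s₂, Z))` apart, and for `R` large the lower quasi-geodesic bound gives
`s₂ - s₁ ≲ κ(‖η t‖ + q (s₂ - s₁))`. Sublinearity of `κ` absorbs the excursion length, so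
`s₂ - s₁ ≲ κ(‖η t‖)`, and hence `d(η t, Z) ≲ κ(‖η t‖)`.
-/

namespace IsSublinear

variable {κ : ℝ → ℝ}

lemma one_le (hκ : IsSublinear κ) {x : ℝ} (hx : 0 ≤ x) : 1 ≤ κ x := hκ.2.2.1 x hx

lemma mono (hκ : IsSublinear κ) {x y : ℝ} (hx : 0 ≤ x) (hxy : x ≤ y) : κ x ≤ κ y :=
  hκ.1 (mem_Ici.2 hx) (mem_Ici.2 (hx.trans hxy)) hxy

lemma add_le (hκ : IsSublinear κ) {x y : ℝ} (hx : 0 ≤ x) (hy : 0 ≤ y) :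
    κ (x + y) ≤ κ x + κ y := by
  rcases (add_nonneg hx hy).eq_or_lt with hxy | hxy
  · obtain ⟨rfl, rfl⟩ : x = 0 ∧ y = 0 := ⟨by linarith, by linarith⟩
    simpa using (zero_le_one.trans (hκ.one_le le_rfl))
  -- concavity between `0` and `x + y`, together with `0 ≤ κ 0`
  have key : ∀ z, 0 ≤ z → z ≤ x + y → z / (x + y) * κ (x + y) ≤ κ z := by
    intro z hz hzxy
    have h := hκ.2.1.2 (self_mem_Ici) (mem_Ici.2 hxy.le) (div_nonneg (sub_nonneg.2 hzxy) hxy.le)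
      (div_nonneg hz hxy.le) (by field_simp [hxy.ne']; ring)
    have hz' : ((x + y - z) / (x + y)) • (0 : ℝ) + (z / (x + y)) • (x + y) = z := by
      simp only [smul_eq_mul, mul_zero, zero_add]; field_simp [hxy.ne']
    rw [hz', smul_eq_mul, smul_eq_mul] at h
    nlinarith [hκ.one_le (le_refl (0:ℝ)), div_nonneg (sub_nonneg.2 hzxy) hxy.le]
  have hsum : x / (x + y) * κ (x + y) + y / (x + y) * κ (x + y) = κ (x + y) := by
    field_simp
  linarith [key x hx (by linarith), key y hy (by linarith)]

lemma exists_le_mul_add (hκ : IsSublinear κ) {ε : ℝ} (hε : 0 < ε) :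
    ∃ C, ∀ x, 0 ≤ x → κ x ≤ ε * x + C := by
  obtain ⟨T, hT⟩ := eventually_atTop.1 (hκ.2.2.2.eventually_lt_const hε)
  refine ⟨κ (max T 1), fun x hx => ?_⟩
  rcases le_or_gt x (max T 1) with h | h
  · nlinarith [hκ.mono hx h]
  · have hx0 : 0 < x := lt_of_lt_of_le zero_lt_one ((le_max_right T 1).trans h.le)
    have := (div_lt_iff₀ hx0).1 (hT x ((le_max_left T 1).trans h.le))
    linarith [hκ.one_le (by positivity : (0:ℝ) ≤ max T 1)]

lemma continuousOn (hκ : IsSublinear κ) : ContinuousOn κ (Ioi 0) := by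
  simpa using ((hκ.2.1.subset Ioi_subset_Ici_self (convex_Ioi 0)).neg.continuousOn isOpen_Ioi).neg

lemma exists_apply_add_le_mul (hκ : IsSublinear κ) {A : ℝ} (hA : 0 < A) :
    ∃ A' > 0, ∀ r x, 0 ≤ r → 0 ≤ x → x ≤ A * κ (r + x) → κ (r + x) ≤ A' * κ r := by
  obtain ⟨C, hC⟩ := hκ.exists_le_mul_add (inv_pos.2 (mul_pos two_pos hA))
  have hC0 : 0 ≤ C := by simpa using (zero_le_one.trans (hκ.one_le le_rfl)).trans (hC 0 le_rfl)
  refine ⟨2 + 2 * C, by positivity, fun r x hr hx hxA => ?_⟩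
  have hκx := hC x hx
  have hsub := hκ.add_le hr hx
  have hκr := hκ.one_le hr
  have hAx : A * (2 * A)⁻¹ * x = x / 2 := by field_simp
  have hx_le : x ≤ 2 * A * κ r + 2 * A * C := by nlinarith
  have : (2 * A)⁻¹ * x ≤ κ r + C := by
    rw [inv_mul_le_iff₀ (by positivity)]; linarith
  nlinarith

end IsSublinear

lemma dist_le_of_forall_step {Y : Type*} [PseudoMetricSpace Y] {P : ℝ → Y} {a b g K E : ℝ}
    (hg : 0 < g) (hab : a ≤ b) (hE : 0 ≤ E)
    (hstep : ∀ v ∈ Ico a b, dist (P v) (P b) ≤ K * (b - v) + E ∨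
      ∃ w ∈ Icc (v + g) b, dist (P v) (P w) ≤ K * (w - v)) :
    dist (P a) (P b) ≤ K * (b - a) + E := by
  suffices h : ∀ n : ℕ, ∀ v ∈ Icc a b, b - v ≤ n * g → dist (P v) (P b) ≤ K * (b - v) + E by
    obtain ⟨n, hn⟩ := exists_nat_ge ((b - a) / g)
    exact h n a ⟨le_rfl, hab⟩ ((div_le_iff₀ hg).1 hn)
  intro n
  induction n with
  | zero =>
    intro v hv hvn
    obtain rfl : v = b := le_antisymm hv.2 (by simpa using hvn)
    simpa using hE
  | succ n ih =>
    intro v hv hvn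
    rcases hv.2.eq_or_lt with rfl | hvb
    · simpa using hE
    rcases hstep v ⟨hv.1, hvb⟩ with h | ⟨w, hw, hvw⟩
    · exact h
    have hwb := ih w ⟨by linarith [hv.1, hw.1], hw.2⟩ (by push_cast at hvn; linarith [hw.1])
    calc dist (P v) (P b) ≤ dist (P v) (P w) + dist (P w) (P b) := dist_triangle _ _ _
      _ ≤ K * (w - v) + (K * (b - w) + E) := add_le_add hvw hwb
      _ = K * (b - v) + E := by ring

lemma exists_eq_zero_forall_nonneg_Icc_left {f : ℝ → ℝ} {a t : ℝ} (hat : a ≤ t)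
    (hf : ContinuousOn f (Icc a t)) (ha : f a ≤ 0) (ht : 0 ≤ f t) :
    ∃ s ∈ Icc a t, f s = 0 ∧ ∀ u ∈ Icc s t, 0 ≤ f u := by
  set S := Icc a t ∩ f ⁻¹' {0}
  have hzero : ∀ u ∈ Icc a t, f u ≤ 0 → ∃ w ∈ Icc u t, w ∈ S := fun u hu hfu => by
    obtain ⟨w, hw, hfw⟩ :=
      intermediate_value_Icc hu.2 (hf.mono (Icc_subset_Icc hu.1 le_rfl)) ⟨hfu, ht⟩
    exact ⟨w, hw, ⟨hu.1.trans hw.1, hw.2⟩, hfw⟩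
  obtain ⟨w, -, hwS⟩ := hzero a ⟨le_rfl, hat⟩ ha
  have hbdd : BddAbove S := ⟨t, fun s hs => hs.1.2⟩
  have hsS : sSup S ∈ S :=
    (hf.preimage_isClosed_of_isClosed isClosed_Icc isClosed_singleton).csSup_mem ⟨w, hwS⟩ hbdd
  refine ⟨sSup S, hsS.1, hsS.2, fun u hu => ?_⟩
  by_contra! hfu
  obtain ⟨w, hw, hwS⟩ := hzero u ⟨hsS.1.1.trans hu.1, hu.2⟩ hfu.le
  obtain rfl : w = u := le_antisymm ((le_csSup hbdd hwS).trans hu.1) hw.1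
  exact hfu.ne hwS.2

lemma exists_eq_zero_forall_nonneg_Icc_right {f : ℝ → ℝ} {t b : ℝ} (htb : t ≤ b)
    (hf : ContinuousOn f (Icc t b)) (ht : 0 ≤ f t) (hb : f b ≤ 0) :
    ∃ s ∈ Icc t b, f s = 0 ∧ ∀ u ∈ Icc t s, 0 ≤ f u := by
  have hf' : ContinuousOn (fun x => f (-x)) (Icc (-b) (-t)) :=
    hf.comp continuousOn_neg fun x hx => ⟨le_neg.1 hx.2, neg_le.1 hx.1⟩
  obtain ⟨s, hs, hfs, hpos⟩ := exists_eq_zero_forall_nonneg_Icc_left (neg_le_neg htb) hf'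
    (by simpa using hb) (by simpa using ht)
  exact ⟨-s, ⟨le_neg.1 hs.2, neg_le.1 hs.1⟩, hfs,
    fun u hu => by simpa using hpos (-u) ⟨le_neg.1 hu.2, neg_le_neg hu.1⟩⟩

lemma exists_Icc_nonneg_of_nonpos_of_nonpos {f : ℝ → ℝ} {a b t : ℝ}
    (hf : ContinuousOn f (Icc a b)) (ha : f a ≤ 0) (hb : f b ≤ 0) (ht : t ∈ Icc a b)
    (hft : 0 ≤ f t) :
    ∃ s₁ ∈ Icc a t, ∃ s₂ ∈ Icc t b, f s₁ = 0 ∧ f s₂ = 0 ∧ ∀ s ∈ Icc s₁ s₂, 0 ≤ f s := by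
  obtain ⟨s₁, hs₁, hfs₁, hpos₁⟩ := exists_eq_zero_forall_nonneg_Icc_left ht.1
    (hf.mono (Icc_subset_Icc le_rfl ht.2)) ha hft
  obtain ⟨s₂, hs₂, hfs₂, hpos₂⟩ := exists_eq_zero_forall_nonneg_Icc_right ht.2
    (hf.mono (Icc_subset_Icc ht.1 le_rfl)) hft hb
  refine ⟨s₁, hs₁, s₂, hs₂, hfs₁, hfs₂, fun s hs => ?_⟩
  rcases le_total s t with h | h
  exacts [hpos₁ s ⟨hs.1, h⟩, hpos₂ s ⟨h, hs.2⟩]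

namespace IsQuasiGeodesicOn

variable {X : Type*} [MetricSpace X] {q Q : ℝ} {η : ℝ → X} {I : Set ℝ}

lemma mono {J : Set ℝ} (hη : IsQuasiGeodesicOn q Q η I) (hJI : J ⊆ I) :
    IsQuasiGeodesicOn q Q η J :=
  ⟨hη.1.mono hJI, fun s hs t ht => hη.2 s (hJI hs) t (hJI ht)⟩

lemma nonneg_of_mem {s : ℝ} (hη : IsQuasiGeodesicOn q Q η I) (hs : s ∈ I) : 0 ≤ Q := by
  simpa using (hη.2 s hs s hs).2

lemma dist_le_of_le {s t : ℝ} (hη : IsQuasiGeodesicOn q Q η I) (hs : s ∈ I) (ht : t ∈ I)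
    (hst : s ≤ t) : dist (η s) (η t) ≤ q * (t - s) + Q := by
  simpa [abs_of_nonpos (sub_nonpos.2 hst)] using (hη.2 s hs t ht).2

lemma le_dist_of_le {s t : ℝ} (hη : IsQuasiGeodesicOn q Q η I) (hs : s ∈ I) (ht : t ∈ I)
    (hst : s ≤ t) : (t - s) / q - Q ≤ dist (η s) (η t) := by
  simpa [abs_of_nonpos (sub_nonpos.2 hst)] using (hη.2 s hs t ht).1

lemma isClosed_image_Ici (hq : 0 < q) (hη : IsQuasiGeodesicOn q Q η (Ici 0)) :
    IsClosed (η '' Ici 0) := by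
  refine isClosed_of_closure_subset fun x hx => ?_
  set T := q * (dist x (η 0) + 1 + Q)
  have hloc : ball x 1 ∩ η '' Ici 0 ⊆ η '' Icc 0 T := by
    rintro _ ⟨hy, s, hs, rfl⟩
    refine ⟨s, ⟨hs, ?_⟩, rfl⟩
    have h1 := hη.le_dist_of_le self_mem_Ici hs hs
    rw [sub_zero, div_sub' hq.ne', div_le_iff₀ hq, dist_comm] at h1
    nlinarith [dist_triangle (η s) x (η 0), mem_ball.1 hy]
  have hcpt : IsCompact (η '' Icc 0 T) :=
    isCompact_Icc.image_of_continuousOn (hη.1.mono Icc_subset_Ici_self)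
  exact image_mono Icc_subset_Ici_self <|
    hcpt.isClosed.closure_subset_iff.2 hloc (isOpen_ball.inter_closure ⟨mem_ball_self one_pos, hx⟩)

end IsQuasiGeodesicOn

section Projection

variable {X : Type*} [MetricSpace X] {Z : Set X}

lemma projSet_nonempty [ProperSpace X] (hZ : IsClosed Z) (hne : Z.Nonempty) (x : X) :
    (projSet Z x).Nonempty := by
  obtain ⟨y, hy, hyd⟩ := hZ.exists_infDist_eq_dist hne x
  exact ⟨y, hy, hyd.symm⟩

lemma dist_le_diam_projSet_union {x y p p' : X} (hp : p ∈ projSet Z x) (hp' : p' ∈ projSet Z y) :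
    dist p p' ≤ diam (projSet Z x ∪ projSet Z y) := by
  have hbdd : ∀ z, Bornology.IsBounded (projSet Z z) := fun z =>
    isBounded_closedBall.subset fun p hp => mem_closedBall'.2 hp.2.le
  exact dist_le_diam_of_mem ((hbdd x).union (hbdd y)) (Or.inl hp) (Or.inr hp')

variable [ProperSpace X] {ρ : X → ℝ} {η : ℝ → X} {q Q R θ s₁ s₂ : ℝ}

lemma IsQuasiGeodesicOn.exists_dist_projSet_le (hZ : IsClosed Z) (hne : Z.Nonempty)
    (hρ : ∀ x y, dist x y ≤ infDist x Z → ∀ p ∈ projSet Z x, ∀ p' ∈ projSet Z y, dist p p' ≤ ρ x)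
    (hη : IsQuasiGeodesicOn q Q η (Icc s₁ s₂)) (hs : s₁ ≤ s₂) (hq : 0 < q) (hR : 0 < R)
    (hQR : 2 * Q ≤ R) (hθ : 0 ≤ θ)
    (hfar : ∀ s ∈ Icc s₁ s₂, R ≤ infDist (η s) Z ∧ ρ (η s) ≤ θ * infDist (η s) Z) :
    ∃ p ∈ projSet Z (η s₁), ∃ p' ∈ projSet Z (η s₂),
      dist p p' ≤ 2 * q * θ * (s₂ - s₁) + θ * (infDist (η s₂) Z + Q) := by
  choose π hπ using projSet_nonempty hZ hne
  have hE : 0 ≤ θ * (infDist (η s₂) Z + Q) :=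
    mul_nonneg hθ (add_nonneg infDist_nonneg (hη.nonneg_of_mem ⟨le_rfl, hs⟩))
  refine ⟨π (η s₁), hπ _, π (η s₂), hπ _,
    dist_le_of_forall_step (P := π ∘ η) (g := R / (2 * q)) (by positivity) hs hE fun v hv => ?_⟩
  have hvI : v ∈ Icc s₁ s₂ := Ico_subset_Icc_self hv
  obtain ⟨hRD, hρD⟩ := hfar v hvI
  have hupper : ∀ w ∈ Icc v s₂, dist (η v) (η w) ≤ q * (w - v) + Q := fun w hw =>
    hη.dist_le_of_le hvI ⟨hvI.1.trans hw.1, hw.2⟩ hw.1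
  by_cases hnear : dist (η v) (η s₂) ≤ infDist (η v) Z
  · left
    calc dist (π (η v)) (π (η s₂)) ≤ θ * infDist (η v) Z :=
          (hρ _ _ hnear _ (hπ _) _ (hπ _)).trans hρD
      _ ≤ θ * (infDist (η s₂) Z + (q * (s₂ - v) + Q)) :=
        mul_le_mul_of_nonneg_left (infDist_le_infDist_add_dist.trans
          (add_le_add le_rfl (hupper s₂ ⟨hv.2.le, le_rfl⟩))) hθ
      _ ≤ 2 * q * θ * (s₂ - v) + θ * (infDist (η s₂) Z + Q) := by
        nlinarith [mul_nonneg (mul_nonneg hq.le hθ) (sub_nonneg.2 hv.2.le)]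
  · right
    obtain ⟨w, hw, hwD⟩ : ∃ w ∈ Icc v s₂, dist (η v) (η w) = infDist (η v) Z :=
      intermediate_value_Icc hv.2.le ((continuous_const.dist continuous_id).comp_continuousOn
        (hη.1.mono (Icc_subset_Icc hvI.1 le_rfl))) ⟨by simp [infDist_nonneg], (not_le.1 hnear).le⟩
    -- the step has length `d(η v, Z) ≥ R ≥ 2Q`, so the additive error costs at most half of it
    have hDw : infDist (η v) Z ≤ 2 * q * (w - v) := by linarith [hupper w hw]
    refine ⟨w, ⟨?_, hw.2⟩, ?_⟩
    · have : R / (2 * q) ≤ w - v := (div_le_iff₀ (by positivity)).2 (by linarith)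
      linarith
    · calc dist (π (η v)) (π (η w)) ≤ θ * infDist (η v) Z :=
            (hρ _ _ hwD.le _ (hπ _) _ (hπ _)).trans hρD
        _ ≤ θ * (2 * q * (w - v)) := mul_le_mul_of_nonneg_left hDw hθ
        _ = 2 * q * θ * (w - v) := by ring

lemma IsQuasiGeodesicOn.sub_le_of_forall_kappa_far {o : X} {κ : ℝ → ℝ} {c : ℝ}
    (hκ : ∀ x, 0 ≤ x → 1 ≤ κ x) (hZ : IsClosed Z) (hne : Z.Nonempty)
    (hcon : ∀ x y : X, dist x y ≤ infDist x Z →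
      diam (projSet Z x ∪ projSet Z y) ≤ c * κ (dist o x))
    (hη : IsQuasiGeodesicOn q Q η (Icc s₁ s₂)) (hs : s₁ ≤ s₂) (hq : 1 ≤ q) (hc : 0 < c)
    (hQR : 2 * Q ≤ R) (hcR : 4 * q ^ 2 * c ≤ R)
    (hfar : ∀ s ∈ Icc s₁ s₂, R * κ (dist o (η s)) ≤ infDist (η s) Z) :
    s₂ - s₁ ≤ 2 * q * (infDist (η s₁) Z + 2 * infDist (η s₂) Z + 2 * Q) := by
  have hq0 : 0 < q := one_pos.trans_le hq
  have hR : 0 < R := (by positivity : 0 < 4 * q ^ 2 * c).trans_le hcR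
  have hθq : 4 * q ^ 2 * (c / R) ≤ 1 := by rwa [mul_div_assoc', div_le_one hR]
  obtain ⟨p, hp, p', hp', hpp'⟩ := hη.exists_dist_projSet_le (θ := c / R) hZ hne
    (fun x y hxy p hp p' hp' => (dist_le_diam_projSet_union hp hp').trans (hcon x y hxy))
    hs hq0 hR hQR (by positivity) fun s hs => by
      refine ⟨(le_mul_of_one_le_right hR.le (hκ _ dist_nonneg)).trans (hfar s hs), ?_⟩
      rw [div_mul_eq_mul_div, le_div_iff₀ hR]
      nlinarith [mul_le_mul_of_nonneg_left (hfar s hs) hc.le]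
  have hlow := hη.le_dist_of_le ⟨le_rfl, hs⟩ ⟨hs, le_rfl⟩ hs
  have htri : dist (η s₁) (η s₂) ≤ infDist (η s₁) Z + dist p p' + infDist (η s₂) Z := by
    have := dist_triangle4 (η s₁) p p' (η s₂)
    rwa [hp.2, dist_comm p', hp'.2] at this
  have hD₂Q : 0 ≤ infDist (η s₂) Z + Q :=
    add_nonneg infDist_nonneg (hη.nonneg_of_mem ⟨le_rfl, hs⟩)
  have hθ4 : 4 * (c / R) ≤ 1 := by nlinarith [one_le_pow₀ (n := 2) hq, div_pos hc hR]
  have h1 : s₂ - s₁ ≤ (infDist (η s₁) Z + 2 * q * (c / R) * (s₂ - s₁)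
      + c / R * (infDist (η s₂) Z + Q) + infDist (η s₂) Z + Q) * q :=
    (div_le_iff₀ hq0).1 (by linarith)
  nlinarith [mul_le_mul_of_nonneg_right hθq (sub_nonneg.2 hs),
    mul_le_mul_of_nonneg_right hθ4 (mul_nonneg hq0.le hD₂Q)]

end Projection

lemma ContinuousOn.exists_kappa_excursion {X : Type*} [MetricSpace X] {o : X} {κ : ℝ → ℝ}
    {Z : Set X} {R a b t : ℝ} {η : ℝ → X} (hη : ContinuousOn η (Icc a b)) (hκ : IsSublinear κ)
    (hR : 0 ≤ R) (ha : η a ∈ Z) (hb : η b ∈ Z) (ht : t ∈ Icc a b)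
    (hft : R * κ (dist o (η t) + 1) ≤ infDist (η t) Z) :
    ∃ s₁ ∈ Icc a t, ∃ s₂ ∈ Icc t b, infDist (η s₁) Z = R * κ (dist o (η s₁) + 1) ∧
      infDist (η s₂) Z = R * κ (dist o (η s₂) + 1) ∧
      ∀ s ∈ Icc s₁ s₂, R * κ (dist o (η s) + 1) ≤ infDist (η s) Z := by
  -- `κ` may jump at `0`, hence the shift by `1`, which keeps `f` continuous
  set f := fun s => infDist (η s) Z - R * κ (dist o (η s) + 1)
  have hf : ContinuousOn f (Icc a b) :=
    ((continuous_infDist_pt Z).comp_continuousOn hη).sub (continuousOn_const.mul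
      (hκ.continuousOn.comp
        (((continuous_const.dist continuous_id).comp_continuousOn hη).add continuousOn_const)
        fun s _ => mem_Ioi.2 (by positivity)))
  have hfZ : ∀ s, η s ∈ Z → f s ≤ 0 := fun s hs => by
    simp only [f, infDist_zero_of_mem hs, zero_sub, neg_nonpos]
    exact mul_nonneg hR (zero_le_one.trans (hκ.one_le (by positivity)))
  obtain ⟨s₁, hs₁, s₂, hs₂, hfs₁, hfs₂, hpos⟩ :=
    exists_Icc_nonneg_of_nonpos_of_nonpos hf (hfZ a ha) (hfZ b hb) ht (sub_nonneg.2 hft)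
  exact ⟨s₁, hs₁, s₂, hs₂, sub_eq_zero.1 hfs₁, sub_eq_zero.1 hfs₂,
    fun s hs => sub_nonneg.1 (hpos s hs)⟩

/-- Here `x = q (s₂ - s₁) + Q + 1` for the maximal excursion `[s₁, s₂]` of `η` through `t`. -/
lemma IsQuasiGeodesicOn.exists_infDist_le_of_kappa_far {X : Type*} [MetricSpace X]
    [ProperSpace X] {o : X} {κ : ℝ → ℝ} {Z : Set X} {c q Q R a b t : ℝ} {η : ℝ → X}
    (hκ : IsSublinear κ) (hZ : IsClosed Z)
    (hcon : ∀ x y : X, dist x y ≤ infDist x Z →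
      diam (projSet Z x ∪ projSet Z y) ≤ c * κ (dist o x))
    (hq : 1 ≤ q) (hc : 0 < c) (hQR : 2 * Q ≤ R) (hcR : 4 * q ^ 2 * c ≤ R)
    (hη : IsQuasiGeodesicOn q Q η (Icc a b)) (ha : η a ∈ Z) (hb : η b ∈ Z) (ht : t ∈ Icc a b)
    (hft : R * κ (dist o (η t) + 1) ≤ infDist (η t) Z) :
    ∃ x ≥ 0, x ≤ (6 * q ^ 2 * R + 4 * q ^ 2 * Q + Q + 1) * κ (dist o (η t) + x) ∧
      infDist (η t) Z ≤ R * κ (dist o (η t) + x) + x := by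
  have hR : 0 ≤ R := (by positivity : 0 ≤ 4 * q ^ 2 * c).trans hcR
  have hQ : 0 ≤ Q := hη.nonneg_of_mem ht
  set r := dist o (η t)
  obtain ⟨s₁, hs₁, s₂, hs₂, hD₁, hD₂, hfar⟩ := hη.1.exists_kappa_excursion hκ hR ha hb ht hft
  have hs : s₁ ≤ s₂ := hs₁.2.trans hs₂.1
  have hL := (hη.mono (Icc_subset_Icc hs₁.1 hs₂.2)).sub_le_of_forall_kappa_far hκ.2.2.1 hZ
    ⟨_, ha⟩ hcon hs hq hc hQR hcR fun s hs => (mul_le_mul_of_nonneg_left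
      (hκ.mono dist_nonneg (le_add_of_nonneg_right zero_le_one)) hR).trans (hfar s hs)
  set x := q * (s₂ - s₁) + Q + 1
  have hdist : ∀ s ∈ Icc s₁ s₂, dist (η t) (η s) ≤ x - 1 := fun s hs => by
    have h := (hη.2 t ht s ⟨hs₁.1.trans hs.1, hs.2.trans hs₂.2⟩).2
    have : |t - s| ≤ s₂ - s₁ :=
      abs_sub_le_iff.2 ⟨by linarith [hs.1, hs₂.1], by linarith [hs.2, hs₁.2]⟩
    nlinarith
  have hκx : ∀ s ∈ Icc s₁ s₂, R * κ (dist o (η s) + 1) ≤ R * κ (r + x) := fun s hs =>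
    mul_le_mul_of_nonneg_left (hκ.mono (by positivity)
      (by linarith [dist_triangle o (η t) (η s), hdist s hs])) hR
  have hκ1 := hκ.one_le (by positivity : 0 ≤ r + x)
  refine ⟨x, by positivity, ?_, ?_⟩
  · have hqL : q * (s₂ - s₁) ≤ 6 * q ^ 2 * R * κ (r + x) + 4 * q ^ 2 * Q := by
      nlinarith [mul_le_mul_of_nonneg_left hL (zero_le_one.trans hq),
        hκx s₁ ⟨le_rfl, hs⟩, hκx s₂ ⟨hs, le_rfl⟩]
    nlinarith [mul_le_mul_of_nonneg_left hκ1 (by positivity : 0 ≤ 4 * q ^ 2 * Q + Q + 1)]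
  · calc infDist (η t) Z ≤ infDist (η s₁) Z + dist (η t) (η s₁) := infDist_le_infDist_add_dist
      _ ≤ R * κ (r + x) + x :=
        add_le_add (hD₁.trans_le (hκx s₁ ⟨le_rfl, hs⟩)) (by linarith [hdist s₁ ⟨le_rfl, hs⟩])

theorem IsKappaContracting.exists_infDist_le_mul {X : Type*} [MetricSpace X] [ProperSpace X]
    {o : X} {κ : ℝ → ℝ} {Z : Set X} (hκ : IsSublinear κ) (hZ : IsClosed Z)
    (hcon : IsKappaContracting o κ Z) {q Q : ℝ} (hq : 1 ≤ q) (hQ : 0 ≤ Q) :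
    ∃ M > 0, ∀ (η : ℝ → X) (a b : ℝ), IsQuasiGeodesicOn q Q η (Icc a b) → η a ∈ Z → η b ∈ Z →
      ∀ t ∈ Icc a b, infDist (η t) Z ≤ M * κ (dist o (η t)) := by
  obtain ⟨c, hc, hcon⟩ := hcon
  set R := 4 * q ^ 2 * c + 2 * Q + 1
  set A := 6 * q ^ 2 * R + 4 * q ^ 2 * Q + Q + 1
  have hcR : 4 * q ^ 2 * c ≤ R := by simp only [R]; linarith
  have hQR : 2 * Q ≤ R := by simp only [R]; linarith [(by positivity : 0 ≤ 4 * q ^ 2 * c)]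
  have hA : 1 ≤ A := le_add_of_nonneg_left (by positivity)
  obtain ⟨A', hA', hA'κ⟩ := hκ.exists_apply_add_le_mul (zero_lt_one.trans_le hA)
  refine ⟨(R + A) * A', by positivity, fun η a b hη ha hb t ht => ?_⟩
  set r := dist o (η t)
  suffices ∃ x ≥ 0, x ≤ A * κ (r + x) ∧ infDist (η t) Z ≤ (R + A) * κ (r + x) by
    obtain ⟨x, hx, hxA, hD⟩ := this
    calc infDist (η t) Z ≤ (R + A) * κ (r + x) := hD
      _ ≤ (R + A) * (A' * κ r) :=
        mul_le_mul_of_nonneg_left (hA'κ r x dist_nonneg hx hxA) (by positivity)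
      _ = (R + A) * A' * κ r := by ring
  rcases le_total (infDist (η t) Z) (R * κ (r + 1)) with hnear | hfar
  · have hκ1 := hκ.one_le (by positivity : 0 ≤ r + 1)
    refine ⟨1, zero_le_one, one_le_mul_of_one_le_of_one_le hA hκ1, hnear.trans ?_⟩
    exact mul_le_mul_of_nonneg_right (le_add_of_nonneg_right (zero_le_one.trans hA))
      (zero_le_one.trans hκ1)
  · obtain ⟨x, hx, hxA, hD⟩ :=
      hη.exists_infDist_le_of_kappa_far hκ hZ hcon hq hc hQR hcR ha hb ht hfar
    refine ⟨x, hx, hxA, hD.trans ?_⟩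
    have := hκ.one_le (by positivity : 0 ≤ r + x)
    nlinarith

theorem kappa_contracting_implies_weakly_kappa_Morse_general
    {X : Type*} [MetricSpace X] [ProperSpace X]
    (o : X) (κ : ℝ → ℝ) (hκ : IsSublinear κ)
    (q₀ Q₀ : ℝ) (hq₀ : 1 ≤ q₀)
    (β : ℝ → X) (hβ : IsQuasiGeodesicOn q₀ Q₀ β (Set.Ici 0))
    (hcon : IsKappaContracting o κ (β '' Set.Ici 0)) :
    ∃ m : ℝ → ℝ → ℝ, (∀ q Q, 0 < m q Q) ∧
      ∀ q Q : ℝ, 1 ≤ q → 0 ≤ Q →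
        ∀ (η : ℝ → X) (a b : ℝ), a ≤ b → IsQuasiGeodesicOn q Q η (Set.Icc a b) →
          η a ∈ β '' Set.Ici 0 → η b ∈ β '' Set.Ici 0 →
          ∀ t ∈ Set.Icc a b,
            Metric.infDist (η t) (β '' Set.Ici 0) ≤ m q Q * κ (dist o (η t)) := by
  have hZ := hβ.isClosed_image_Ici (zero_lt_one.trans_le hq₀)
  -- outside `1 ≤ q`, `0 ≤ Q` the gauge is unconstrained: use the clamped parameters there
  choose m hm_pos hm using fun q Q : ℝ =>
    hcon.exists_infDist_le_mul hκ hZ (le_max_right q 1) (le_max_right Q 0)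
  refine ⟨m, hm_pos, fun q Q hq hQ η a b _ hη ha hb t ht => ?_⟩
  have := hm q Q η a b
  rw [max_eq_left hq, max_eq_left hQ] at this
  exact this hη ha hb t ht

/-- A `κ`-contracting quasi-geodesic ray is weakly `κ`-Morse: there is a
Morse gauge `m` such that every `(q,Q)`-quasi-geodesic segment with endpoints on the ray
stays in the `(κ, m q Q)`-neighbourhood of the ray. -/
theorem kappa_contracting_implies_weakly_kappa_Morse
    {X : Type*} [MetricSpace X] [ProperSpace X] (hgeo : GeodesicSpace X)
    (o : X) (κ : ℝ → ℝ) (hκ : IsSublinear κ)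
    (q₀ Q₀ : ℝ) (hq₀ : 1 ≤ q₀) (hQ₀ : 0 ≤ Q₀)
    (β : ℝ → X) (hβo : β 0 = o) (hβ : IsQuasiGeodesicOn q₀ Q₀ β (Set.Ici 0))
    (hcon : IsKappaContracting o κ (β '' Set.Ici 0)) :
    ∃ m : ℝ → ℝ → ℝ, (∀ q Q, 0 < m q Q) ∧
      ∀ q Q : ℝ, 1 ≤ q → 0 ≤ Q →
        ∀ (η : ℝ → X) (a b : ℝ), a ≤ b → IsQuasiGeodesicOn q Q η (Set.Icc a b) →
          η a ∈ β '' Set.Ici 0 → η b ∈ β '' Set.Ici 0 →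
          ∀ t ∈ Set.Icc a b,
            Metric.infDist (η t) (β '' Set.Ici 0) ≤ m q Q * κ (dist o (η t)) :=
  kappa_contracting_implies_weakly_kappa_Morse_general o κ hκ q₀ Q₀ hq₀ β hβ hcon
end

section
/- Let X be a metric space with basepoint o, and let κ : [0,∞) → [1,∞) be monotone increasing and concave. Let A, B, C be nonempty subsets of X and let n, m ≥ 1. If A ⊆ N_κ(B, n) and B ⊆ N_κ(C, m), then A ⊆ N_κ(C, n') where n' = n + m(1 + n·κ(1)). In particular, the relation of κ-fellow traveling is transitive after enlarging the multiplicative constant. -/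
/-! A concave function `κ` on `[0, ∞)` with `κ 0 ≥ 0` is subadditive and grows at most linearly,
so `κ (‖a‖ + d(a, b)) ≤ κ ‖a‖ + d(a, b) · κ 1` once `d(a, b) ≥ 1`. Given `a ∈ A`, choose `b ∈ B`
with `d(a, b)` just above `n κ ‖a‖ ≥ 1`; then
`d(a, C) ≤ d(a, b) + m κ ‖b‖ ≤ d(a, b) + m (κ ‖a‖ + d(a, b) κ 1)`, and letting `d(a, b)` tend to
`n κ ‖a‖` gives the bound `(n + m (1 + n κ 1)) κ ‖a‖`. -/

open Metric Set Filter

/-- The `(κ, n)`-neighbourhood of a subset `Z` with respect to the basepoint `o`: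
points `x` with `d(x, Z) ≤ n · κ(‖x‖)`. -/
def KNbhd {X : Type*} [MetricSpace X] (o : X) (κ : ℝ → ℝ) (Z : Set X) (n : ℝ) : Set X :=
  {x | Metric.infDist x Z ≤ n * κ (dist o x)}

namespace ConcaveOn

variable {f : ℝ → ℝ}

theorem mul_map_le_map_mul (hf : ConcaveOn ℝ (Ici 0) f) (h0 : 0 ≤ f 0) {a x : ℝ}
    (ha₀ : 0 ≤ a) (ha₁ : a ≤ 1) (hx : 0 ≤ x) : a * f x ≤ f (a * x) := by
  have h := hf.2 (mem_Ici.2 hx) self_mem_Ici ha₀ (sub_nonneg.2 ha₁) (add_sub_cancel a 1)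
  simp only [smul_eq_mul, mul_zero, add_zero] at h
  nlinarith [mul_nonneg (sub_nonneg.2 ha₁) h0]

theorem map_add_le (hf : ConcaveOn ℝ (Ici 0) f) (h0 : 0 ≤ f 0) {s t : ℝ}
    (hs : 0 ≤ s) (ht : 0 ≤ t) : f (s + t) ≤ f s + f t := by
  rcases (add_nonneg hs ht).eq_or_lt with h | h
  · obtain ⟨rfl, rfl⟩ : s = 0 ∧ t = 0 := ⟨by linarith, by linarith⟩
    simpa using h0
  · have weight_le {u : ℝ} (hu₀ : 0 ≤ u) (hu : u ≤ s + t) : u / (s + t) * f (s + t) ≤ f u := by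
      simpa [div_mul_cancel₀ u h.ne'] using
        hf.mul_map_le_map_mul h0 (div_nonneg hu₀ h.le) ((div_le_one h).2 hu) h.le
    calc f (s + t) = s / (s + t) * f (s + t) + t / (s + t) * f (s + t) := by
          field_simp
      _ ≤ f s + f t := add_le_add (weight_le hs (by linarith)) (weight_le ht (by linarith))

theorem map_le_mul_map_one (hf : ConcaveOn ℝ (Ici 0) f) (hmono : MonotoneOn f (Ici 0))
    (h0 : 0 ≤ f 0) {t r : ℝ} (ht : 0 ≤ t) (htr : t ≤ r) (hr : 1 ≤ r) : f t ≤ r * f 1 := by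
  have hr₀ : 0 < r := by linarith
  have h := hf.mul_map_le_map_mul h0 (inv_nonneg.2 hr₀.le) (inv_le_one_of_one_le₀ hr) hr₀.le
  rw [inv_mul_cancel₀ hr₀.ne'] at h
  exact (hmono (mem_Ici.2 ht) (mem_Ici.2 hr₀.le) htr).trans ((inv_mul_le_iff₀ hr₀).1 h)

end ConcaveOn

theorem infDist_le_of_mem_KNbhd {X : Type*} [MetricSpace X] {o a b : X} {κ : ℝ → ℝ}
    (hmono : MonotoneOn κ (Ici 0)) (hconc : ConcaveOn ℝ (Ici 0) κ) (h0 : 0 ≤ κ 0)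
    {C : Set X} {m r : ℝ} (hm : 0 ≤ m) (hb : b ∈ KNbhd o κ C m) (hab : dist a b ≤ r)
    (hr : 1 ≤ r) : infDist a C ≤ r + m * (κ (dist o a) + r * κ 1) := by
  have hκb : κ (dist o b) ≤ κ (dist o a) + r * κ 1 :=
    calc κ (dist o b) ≤ κ (dist o a + dist a b) :=
          hmono dist_nonneg (add_nonneg dist_nonneg dist_nonneg) (dist_triangle o a b)
      _ ≤ κ (dist o a) + κ (dist a b) := hconc.map_add_le h0 dist_nonneg dist_nonneg
      _ ≤ κ (dist o a) + r * κ 1 := by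
          gcongr; exact hconc.map_le_mul_map_one hmono h0 dist_nonneg hab hr
  calc infDist a C ≤ dist a b + infDist b C := by
        linarith [infDist_le_infDist_add_dist (x := a) (y := b) (s := C)]
    _ ≤ r + m * (κ (dist o a) + r * κ 1) := add_le_add hab (hb.trans (by gcongr))

theorem kappa_neighbourhood_trans_general
    {X : Type*} [MetricSpace X] (o : X) (κ : ℝ → ℝ)
    (hmono : MonotoneOn κ (Set.Ici 0)) (hconc : ConcaveOn ℝ (Set.Ici 0) κ)
    (hone : ∀ t : ℝ, 0 ≤ t → 1 ≤ κ t)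
    (A B C : Set X) (hB : B.Nonempty)
    (n m : ℝ) (hn : 1 ≤ n) (hm : 1 ≤ m)
    (hAB : A ⊆ KNbhd o κ B n) (hBC : B ⊆ KNbhd o κ C m) :
    A ⊆ KNbhd o κ C (n + m * (1 + n * κ 1)) := by
  intro a ha
  set K := κ (dist o a)
  have hnK : 1 ≤ n * K := one_le_mul_of_one_le_of_one_le hn (hone _ dist_nonneg)
  have h0 : 0 ≤ κ 0 := zero_le_one.trans (hone 0 le_rfl)
  have hbound : ∀ r, n * K < r → infDist a C ≤ r + m * (K + r * κ 1) := fun r hr ↦ by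
    obtain ⟨b, hb, hab⟩ := (infDist_lt_iff hB).1 ((hAB ha).trans_lt hr)
    exact infDist_le_of_mem_KNbhd hmono hconc h0 (by linarith) (hBC hb) hab.le (hnK.trans hr.le)
  have hlim : infDist a C ≤ n * K + m * (K + n * K * κ 1) :=
    ge_of_tendsto ((by fun_prop : Continuous fun r ↦ r + m * (K + r * κ 1)).continuousWithinAt
      (s := Ioi (n * K)) (x := n * K)) (eventually_nhdsWithin_of_forall hbound)
  change infDist a C ≤ (n + m * (1 + n * κ 1)) * K
  linarith

/-- Chaining of `κ`-neighbourhoods: if `A ⊆ N_κ(B, n)` and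
`B ⊆ N_κ(C, m)` with `n, m ≥ 1`, then `A ⊆ N_κ(C, n + m(1 + n·κ(1)))`. -/
theorem kappa_neighbourhood_trans
    {X : Type*} [MetricSpace X] (o : X) (κ : ℝ → ℝ)
    (hmono : MonotoneOn κ (Set.Ici 0)) (hconc : ConcaveOn ℝ (Set.Ici 0) κ)
    (hone : ∀ t : ℝ, 0 ≤ t → 1 ≤ κ t)
    (A B C : Set X) (hA : A.Nonempty) (hB : B.Nonempty) (hC : C.Nonempty)
    (n m : ℝ) (hn : 1 ≤ n) (hm : 1 ≤ m)
    (hAB : A ⊆ KNbhd o κ B n) (hBC : B ⊆ KNbhd o κ C m) :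
    A ⊆ KNbhd o κ C (n + m * (1 + n * κ 1)) :=
  kappa_neighbourhood_trans_general o κ hmono hconc hone A B C hB n m hn hm hAB hBC
end

section
/- Let κ : [0,∞) → [1,∞) be a function that is bounded on compact sets and satisfies lim_{t→∞} κ(t)/t = 0. Then there exists a monotone increasing, concave function κ̄ : [0,∞) → [1,∞) such that κ(t) ≤ κ̄(t) for all t ≥ 0 and lim_{t→∞} κ̄(t)/t = 0. In other words, every locally bounded sublinear function admits a monotone increasing, concave, sublinear majorant. -/
/-!
For every `ε > 0`, local boundedness and `κ t / t → 0` give an affine bound `κ t ≤ A ε + ε t`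
on `[0, ∞)`. The lower envelope `κ' t = ⨅ ε > 0, A ε + ε t` of these increasing affine functions
is monotone, concave and still above `κ`, and it lies below each `A ε + ε t`, so `κ' t / t → 0`.
-/

open Filter Topology Set

theorem monotoneOn_ciInf {ι α : Type*} [Preorder α] {s : Set α} {f : ι → α → ℝ}
    (hf : ∀ i, MonotoneOn (f i) s) (hbdd : ∀ x ∈ s, BddBelow (range fun i => f i x)) :
    MonotoneOn (fun x => ⨅ i, f i x) s := fun _ hx _ hy hxy =>
  ciInf_mono (hbdd _ hx) fun i => hf i hx hy hxy

theorem concaveOn_ciInf {ι E : Type*} [Nonempty ι] [AddCommMonoid E] [Module ℝ E] {s : Set E}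
    {f : ι → E → ℝ} (hf : ∀ i, ConcaveOn ℝ s (f i))
    (hbdd : ∀ x ∈ s, BddBelow (range fun i => f i x)) :
    ConcaveOn ℝ s (fun x => ⨅ i, f i x) := by
  refine ⟨(hf (Classical.arbitrary ι)).1, fun x hx y hy a b ha hb hab => le_ciInf fun i => ?_⟩
  calc a • (⨅ j, f j x) + b • (⨅ j, f j y) ≤ a • f i x + b • f i y := by
        gcongr
        exacts [ciInf_le (hbdd x hx) i, ciInf_le (hbdd y hy) i]
    _ ≤ f i (a • x + b • y) := (hf i).2 hx hy ha hb hab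

theorem exists_add_mul_bound_of_tendsto_div {κ : ℝ → ℝ}
    (hbdd : ∀ T : ℝ, ∃ M : ℝ, ∀ t ∈ Icc (0:ℝ) T, κ t ≤ M)
    (hsub : Tendsto (fun t => κ t / t) atTop (𝓝 0)) {ε : ℝ} (hε : 0 < ε) :
    ∃ A : ℝ, ∀ t, 0 ≤ t → κ t ≤ A + ε * t := by
  obtain ⟨T, hT⟩ := eventually_atTop.1 ((hsub.eventually_lt_const hε).and (eventually_gt_atTop 0))
  obtain ⟨M, hM⟩ := hbdd T
  refine ⟨max M 0, fun t ht => ?_⟩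
  rcases le_total t T with htT | hTt
  · nlinarith [hM t ⟨ht, htT⟩, le_max_left M 0]
  · obtain ⟨hlt, htpos⟩ := hT t hTt
    nlinarith [(div_lt_iff₀ htpos).1 hlt, le_max_right M 0]

theorem tendsto_div_zero_of_add_mul_bound {g : ℝ → ℝ} (hg : ∀ᶠ t in atTop, 0 ≤ g t)
    (hbound : ∀ ε > 0, ∃ A : ℝ, ∀ᶠ t in atTop, g t ≤ A + ε * t) :
    Tendsto (fun t => g t / t) atTop (𝓝 0) := by
  refine tendsto_order.2 ⟨fun a ha => ?_, fun a ha => ?_⟩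
  · filter_upwards [hg, eventually_gt_atTop 0] with t hgt ht
    exact ha.trans_le (div_nonneg hgt ht.le)
  · obtain ⟨A, hA⟩ := hbound (a / 2) (half_pos ha)
    have hA_div : Tendsto (fun t => A / t + a / 2) atTop (𝓝 (a / 2)) := by
      simpa using (tendsto_const_nhds.div_atTop tendsto_id).add_const (a / 2)
    filter_upwards [hA, eventually_gt_atTop 0, hA_div.eventually_lt_const (half_lt_self ha)]
      with t hgt ht hlt
    calc g t / t ≤ (A + a / 2 * t) / t := by gcongr
      _ = A / t + a / 2 := by field_simp
      _ < a := hlt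

/-- Every locally bounded sublinear function `κ : [0,∞) → [1,∞)` admits a
monotone increasing, concave, sublinear majorant `κ̄ : [0,∞) → [1,∞)`. -/
theorem exists_concave_monotone_sublinear_majorant (κ : ℝ → ℝ)
    (hone : ∀ t : ℝ, 0 ≤ t → 1 ≤ κ t)
    (hbdd : ∀ T : ℝ, ∃ M : ℝ, ∀ t ∈ Set.Icc (0:ℝ) T, κ t ≤ M)
    (hsub : Tendsto (fun t => κ t / t) atTop (nhds 0)) :
    ∃ κ' : ℝ → ℝ, MonotoneOn κ' (Set.Ici 0) ∧ ConcaveOn ℝ (Set.Ici 0) κ' ∧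
      (∀ t : ℝ, 0 ≤ t → 1 ≤ κ' t) ∧ (∀ t : ℝ, 0 ≤ t → κ t ≤ κ' t) ∧
      Tendsto (fun t => κ' t / t) atTop (nhds 0) := by
  choose A hA using fun ε : Ioi (0:ℝ) => exists_add_mul_bound_of_tendsto_div hbdd hsub ε.2
  set κ' : ℝ → ℝ := fun t => ⨅ ε : Ioi (0:ℝ), A ε + ε * t
  have hbddBelow : ∀ t ∈ Ici (0:ℝ), BddBelow (range fun ε : Ioi (0:ℝ) => A ε + ε * t) :=
    fun t ht => ⟨κ t, forall_mem_range.2 fun ε => hA ε t ht⟩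
  have hmajor : ∀ t, 0 ≤ t → κ t ≤ κ' t := fun t ht => le_ciInf fun ε => hA ε t ht
  refine ⟨κ', monotoneOn_ciInf (fun ε => ?_) hbddBelow,
    concaveOn_ciInf (fun ε => ?_) hbddBelow, fun t ht => (hone t ht).trans (hmajor t ht),
    hmajor, tendsto_div_zero_of_add_mul_bound ?_ fun ε hε => ⟨A ⟨ε, hε⟩, ?_⟩⟩
  · exact fun x _ y _ hxy => by gcongr; exact ε.2.le
  · exact (concaveOn_const _ (convex_Ici 0)).add ((LinearMap.mul ℝ ℝ ε).concaveOn (convex_Ici 0))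
  · filter_upwards [eventually_ge_atTop 0] with t ht
    linarith [hone t ht, hmajor t ht]
  · filter_upwards [eventually_ge_atTop 0] with t ht using ciInf_le (hbddBelow t ht) ⟨ε, hε⟩
end

section
/- Let G be a countable group acting by homeomorphisms on a compact Hausdorff topological space B such that the action is minimal (every G-orbit is dense in B) and every G-orbit is infinite. Let μ be a probability measure on G whose support generates G as a semigroup, and let ν be a μ-stationary Borel probability measure on B. Then ν has no atoms and the support of ν is all of B. -/
open MeasureTheory Set MulAction
open scoped ENNReal Pointwise

/-! Stationarity writes `ν {a}` as the `μ`-average of the masses `ν {g⁻¹ • a}`. Only finitely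
many atoms carry more than half of the largest atomic mass, so some atom `a` has maximal mass,
and then the average can only reach `ν {a}` if `ν {g⁻¹ • a} = ν {a}` for every `g` in the
support of `μ`, hence for every `g` in the semigroup it generates, which is `G`. So every point
of the infinite orbit of `a` has mass `ν {a}`, which forces `ν {a} = 0`. In the same way an open
`ν`-null set has `ν`-null translates, and by minimality its translates cover the space. -/

lemma ENNReal.eq_of_tsum_mul_eq_tsum_mul_const {ι : Type*} {w f : ι → ℝ≥0∞}
    {c : ℝ≥0∞} (hf : ∀ i, f i ≤ c) (hc : ∑' i, w i * c ≠ ∞)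
    (heq : ∑' i, w i * f i = ∑' i, w i * c) {i : ι} (hi : w i ≠ 0) : f i = c := by
  by_contra hne
  have hlt : f i < c := (hf i).lt_of_ne hne
  have hwi : w i ≠ ∞ := (ENNReal.lt_top_of_mul_ne_top_left
    (ne_top_of_le_ne_top hc (ENNReal.le_tsum i)) (ne_bot_of_gt hlt)).ne
  exact (ENNReal.tsum_lt_tsum (heq ▸ hc) (fun j => mul_le_mul_right (hf j) (w j))
    (ENNReal.mul_lt_mul_right hi hwi hlt)).ne heq

lemma MulAction.forall_mem_orbit_of_closure_eq_top {G α : Type*} [Group G] [MulAction G α]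
    {S : Set G} (hS : Subsemigroup.closure S = ⊤) {p : α → Prop}
    (hp : ∀ a, p a → ∀ g ∈ S, p (g⁻¹ • a)) {a : α} (ha : p a) : ∀ b ∈ orbit G a, p b := by
  rintro _ ⟨g, rfl⟩
  have key : ∀ g ∈ Subsemigroup.closure S, ∀ a, p a → p (g⁻¹ • a) := by
    intro g hg
    induction hg using Subsemigroup.closure_induction with
    | mem g hg => exact fun a ha => hp a ha g hg
    | mul x y _ _ hx hy =>
      exact fun a ha => by simpa only [mul_inv_rev, mul_smul] using hy _ (hx a ha)
  simpa using key g⁻¹ (hS ▸ Subsemigroup.mem_top _) a ha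

lemma MeasureTheory.exists_forall_measure_singleton_le {B : Type*} [MeasurableSpace B]
    [MeasurableSingletonClass B] [Nonempty B] (ν : Measure B) [IsFiniteMeasure ν] :
    ∃ a, ∀ b, ν {b} ≤ ν {a} := by
  set m := ⨆ b, ν {b}
  rcases eq_or_ne m 0 with hm | hm
  · exact ⟨Classical.arbitrary B, fun b => ((le_iSup (fun b => ν {b}) b).trans_eq hm).trans
      zero_le⟩
  have hm_top : m ≠ ∞ := ne_top_of_le_ne_top (measure_ne_top ν univ)
    (iSup_le fun b => measure_mono (subset_univ _))
  have hfin : {b | m / 2 ≤ ν {b}}.Finite :=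
    Measure.finite_const_le_meas_of_disjoint_iUnion ν (ENNReal.half_pos hm)
      measurableSet_singleton (fun _ _ hne => disjoint_singleton.2 hne) (measure_ne_top ν _)
  obtain ⟨b, hb⟩ := lt_iSup_iff.1 (ENNReal.half_lt_self hm hm_top)
  obtain ⟨a, ha, hmax⟩ := exists_max_image _ (fun b => ν {b}) hfin ⟨b, hb.le⟩
  refine ⟨a, fun c => ?_⟩
  by_cases hc : m / 2 ≤ ν {c}
  · exact hmax c hc
  · exact (not_le.1 hc).le.trans ha

def MeasureTheory.Measure.IsStationary {G B : Type*} [Group G] [MeasurableSpace G]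
    [MulAction G B] [MeasurableSpace B] (ν : Measure B) (μ : Measure G) : Prop :=
  ∀ A : Set B, MeasurableSet A → ν A = ∑' g : G, μ {g} * ν ((fun b : B => g • b) ⁻¹' A)

namespace MeasureTheory.Measure.IsStationary

variable {G B : Type*} [Group G] [MeasurableSpace G] [MulAction G B] [MeasurableSpace B]
  {μ : Measure G} {ν : Measure B}

lemma measure_inv_smul_eq_zero (h : IsStationary ν μ) {A : Set B} (hA : MeasurableSet A)
    (hA0 : ν A = 0) {g : G} (hg : μ {g} ≠ 0) : ν (g⁻¹ • A) = 0 := by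
  have hsum := h A hA
  rw [hA0] at hsum
  rw [← preimage_smul]
  exact (mul_eq_zero.1 (ENNReal.tsum_eq_zero.1 hsum.symm g)).resolve_left hg

lemma measure_singleton_inv_smul_eq [Countable G] [MeasurableSingletonClass G]
    [IsProbabilityMeasure μ] [MeasurableSingletonClass B] [IsFiniteMeasure ν]
    (h : IsStationary ν μ) {a : B} (ha : ∀ b, ν {b} ≤ ν {a}) {g : G} (hg : μ {g} ≠ 0) :
    ν {g⁻¹ • a} = ν {a} := by
  have hμ : ∑' g, μ {g} = 1 := by
    simpa using tsum_indicator_apply_singleton μ univ MeasurableSet.univ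
  have hsum : ∑' g, μ {g} * ν {a} = ν {a} := by rw [ENNReal.tsum_mul_right, hμ, one_mul]
  refine ENNReal.eq_of_tsum_mul_eq_tsum_mul_const (f := fun g => ν {g⁻¹ • a})
    (fun g => ha _) (hsum ▸ measure_ne_top ν _) ?_ hg
  rw [hsum, h {a} (measurableSet_singleton a)]
  simp_rw [preimage_smul, smul_set_singleton]

lemma measure_singleton_eq_zero [Countable G] [MeasurableSingletonClass G]
    [IsProbabilityMeasure μ] [MeasurableSingletonClass B] [IsFiniteMeasure ν]
    (h : IsStationary ν μ) (hgen : Subsemigroup.closure {g | μ {g} ≠ 0} = ⊤)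
    (hinf : ∀ b : B, (orbit G b).Infinite) (b : B) : ν {b} = 0 := by
  have : Nonempty B := ⟨b⟩
  obtain ⟨a, ha⟩ := exists_forall_measure_singleton_le ν
  have horbit : ∀ c ∈ orbit G a, ν {c} = ν {a} :=
    forall_mem_orbit_of_closure_eq_top hgen (p := fun c => ν {c} = ν {a})
      (fun c hc g hg =>
        (h.measure_singleton_inv_smul_eq (fun b => (ha b).trans_eq hc.symm) hg).trans hc)
      rfl
  by_contra hb
  have ha0 : ν {a} ≠ 0 := (pos_iff_ne_zero.2 hb |>.trans_le (ha b)).ne'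
  exact measure_ne_top ν (orbit G a)
    ((hinf a).meas_eq_top ⟨ν {a}, ha0, fun c hc => (horbit c hc).ge⟩)

lemma measure_pos_of_isOpen [Countable G] [TopologicalSpace B] [OpensMeasurableSpace B]
    [ContinuousConstSMul G B] [IsMinimal G B] [NeZero ν]
    (h : IsStationary ν μ) (hgen : Subsemigroup.closure {g | μ {g} ≠ 0} = ⊤)
    {U : Set B} (hU : IsOpen U) (hne : U.Nonempty) : 0 < ν U := by
  refine pos_iff_ne_zero.2 fun hU0 => NeZero.ne ν (Measure.measure_univ_eq_zero.1 ?_)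
  have hnull : ∀ V ∈ orbit G U, IsOpen V ∧ ν V = 0 :=
    forall_mem_orbit_of_closure_eq_top hgen (p := fun V => IsOpen V ∧ ν V = 0)
      (fun V hV g hg => ⟨hV.1.smul g⁻¹, h.measure_inv_smul_eq_zero hV.1.measurableSet hV.2 hg⟩)
      ⟨hU, hU0⟩
  rw [← hU.iUnion_smul G hne]
  exact measure_iUnion_null fun g => (hnull _ (mem_orbit U g)).2

end MeasureTheory.Measure.IsStationary

theorem stationary_measure_nonatomic_full_support_general
    {G B : Type*} [Group G] [Countable G] [MeasurableSpace G] [DiscreteMeasurableSpace G]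
    [TopologicalSpace B] [T2Space B]
    [MeasurableSpace B] [BorelSpace B] [MulAction G B]
    (hcont : ∀ g : G, Continuous (fun b : B => g • b))
    (hmin : ∀ b : B, Dense (MulAction.orbit G b))
    (hinf : ∀ b : B, (MulAction.orbit G b).Infinite)
    (μ : Measure G) [IsProbabilityMeasure μ]
    (hgen : ∀ g : G, g ∈ Subsemigroup.closure {g' : G | μ {g'} ≠ 0})
    (ν : Measure B) [IsProbabilityMeasure ν]
    (hstat : ∀ A : Set B, MeasurableSet A →
      ν A = ∑' g : G, μ {g} * ν ((fun b : B => g • b) ⁻¹' A)) :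
    (∀ b : B, ν {b} = 0) ∧ ∀ U : Set B, IsOpen U → U.Nonempty → 0 < ν U := by
  have : ContinuousConstSMul G B := ⟨hcont⟩
  have : IsMinimal G B := ⟨hmin⟩
  have hstat : ν.IsStationary μ := hstat
  have hgen : Subsemigroup.closure {g | μ {g} ≠ 0} = ⊤ := eq_top_iff.2 fun g _ => hgen g
  exact ⟨hstat.measure_singleton_eq_zero hgen hinf,
    fun _ hU hne => hstat.measure_pos_of_isOpen hgen hU hne⟩

/-- For a minimal continuous action with infinite orbits of a countable
group `G` on a compact Hausdorff space `B`, and a probability measure `μ` on `G` whose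
support generates `G` as a semigroup, any `μ`-stationary Borel probability measure `ν` on
`B` has no atoms and has full support. -/
theorem stationary_measure_nonatomic_full_support
    {G B : Type*} [Group G] [Countable G] [MeasurableSpace G] [DiscreteMeasurableSpace G]
    [TopologicalSpace B] [CompactSpace B] [T2Space B]
    [MeasurableSpace B] [BorelSpace B] [MulAction G B]
    (hcont : ∀ g : G, Continuous (fun b : B => g • b))
    (hmin : ∀ b : B, Dense (MulAction.orbit G b))
    (hinf : ∀ b : B, (MulAction.orbit G b).Infinite)
    (μ : Measure G) [IsProbabilityMeasure μ]
    (hgen : ∀ g : G, g ∈ Subsemigroup.closure {g' : G | μ {g'} ≠ 0})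
    (ν : Measure B) [IsProbabilityMeasure ν]
    (hstat : ∀ A : Set B, MeasurableSet A →
      ν A = ∑' g : G, μ {g} * ν ((fun b : B => g • b) ⁻¹' A)) :
    (∀ b : B, ν {b} = 0) ∧ ∀ U : Set B, IsOpen U → U.Nonempty → 0 < ν U :=
  stationary_measure_nonatomic_full_support_general hcont hmin hinf μ hgen ν hstat
end
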